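/- Let C be an n×n complex matrix. Then C is Hirano invertible if and only if every eigenvalue of C (equivalently, every element of the spectrum of C) belongs to the set {−1, 0, 1}. -/

import Mathlib

/-!
Both conditions only involve a commutative subring generated by `a` (and the witness), and there
`a` is Hirano invertible iff `a - a³` is nilpotent: if `(a - a³)ᵐ = 0` and `(1 - a²)ᵐ = 1 - a²w`,
then `aᵐ (a²w) = aᵐ`, so `e = (a²w)ᵐ⁺¹` is idempotent and `x = a²ᵐ⁺¹wᵐ⁺¹`, with `ax = e`, is a
Hirano inverse. For a complex matrix `C`, the matrix `C - C³ = (X - X³)(C)` is nilpotent iff every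
eigenvalue is a root of `X - X³`: one way by spectral mapping, the other by Cayley–Hamilton, since
the characteristic polynomial then divides a power of `X - X³`.
-/

open Polynomial

/-- An element of a ring is *Hirano invertible* if there exists `x` with
`a * x = x * a`, `x = x * a * x`, and `a ^ 2 - a * x` nilpotent. -/
def IsHirano {R : Type*} [Ring R] (a : R) : Prop :=
  ∃ x : R, a * x = x * a ∧ x = x * a * x ∧ IsNilpotent (a ^ 2 - a * x)

theorem IsHirano.map {R S F : Type*} [Ring R] [Ring S] [FunLike F R S] [RingHomClass F R S]
    (f : F) {a : R} (h : IsHirano a) : IsHirano (f a) := by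
  obtain ⟨x, hcomm, hx, hnil⟩ := h
  refine ⟨f x, by rw [← map_mul, hcomm, map_mul], by rw [← map_mul, ← map_mul, ← hx], ?_⟩
  simpa using hnil.map f

namespace CommRing

variable {R : Type*} [CommRing R] {a : R}

theorem isNilpotent_self_sub_pow_three_of_isHirano (h : IsHirano a) :
    IsNilpotent (a - a ^ 3) := by
  obtain ⟨x, -, hx, hnil⟩ := h
  set e := a * x
  set N := a ^ 2 - e
  -- `a² = e + N` with `e` idempotent, so `(a - a³)² = (e + N)(1 - e - N)²` is a multiple of `N`.
  have hsq : (a - a ^ 3) ^ 2 = N * (e * N + (1 - e) ^ 2 - 2 * (1 - e) * N + N ^ 2) := by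
    linear_combination (1 - e - 2 * N) * congrArg (a * ·) hx
  exact IsNilpotent.of_pow (m := 2) (hsq ▸ Commute.isNilpotent_mul_right (Commute.all _ _) hnil)

theorem isHirano_of_isNilpotent_self_sub_pow_three (h : IsNilpotent (a - a ^ 3)) :
    IsHirano a := by
  obtain ⟨m, hm⟩ := h
  obtain ⟨w, hw⟩ : a ^ 2 ∣ 1 - (1 - a ^ 2) ^ m := by
    have := sub_dvd_pow_sub_pow (1 : R) (1 - a ^ 2) m
    rwa [sub_sub_cancel, one_pow] at this
  have hfix : ∀ j, a ^ m * (a ^ 2 * w) ^ j = a ^ m := by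
    have hm' : a ^ m * (1 - a ^ 2) ^ m = 0 := by rw [← mul_pow, ← hm]; ring
    intro j
    induction j with
    | zero => rw [pow_zero, mul_one]
    | succ j ih => rw [pow_succ, ← mul_assoc, ih]; linear_combination -a ^ m * hw - hm'
  set e := (a ^ 2 * w) ^ (m + 1)
  have he : IsIdempotentElem e := by
    show e * e = e
    linear_combination (a ^ (m + 2) * w ^ (m + 1)) * hfix (m + 1)
  refine ⟨a ^ (2 * m + 1) * w ^ (m + 1), mul_comm _ _, ?_, ?_⟩
  · linear_combination -(a ^ (m + 1) * w ^ (m + 1)) * hfix (m + 1)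
  have hsplit :
      a ^ 2 - a * (a ^ (2 * m + 1) * w ^ (m + 1)) = a ^ 2 * (1 - e) - (1 - a ^ 2) * e := by
    ring
  have hnil₁ : IsNilpotent (a ^ 2 * (1 - e)) := ⟨m + 1, by
    rw [mul_pow, he.one_sub.pow_succ_eq]; linear_combination -a ^ (m + 2) * hfix (m + 1)⟩
  have hnil₂ : IsNilpotent ((1 - a ^ 2) * e) := ⟨m + 1, by
    rw [mul_pow, he.pow_succ_eq, pow_succ]
    linear_combination -(1 - a ^ 2) * e * hw - (1 - a ^ 2) * a ^ (m + 2) * w ^ (m + 1) * hfix 1⟩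
  rw [hsplit]
  exact (Commute.all _ _).isNilpotent_sub hnil₁ hnil₂

end CommRing

open scoped IsMulCommutative in
theorem isHirano_iff_isNilpotent_self_sub_pow_three {R : Type*} [Ring R] (a : R) :
    IsHirano a ↔ IsNilpotent (a - a ^ 3) := by
  constructor
  · rintro ⟨x, hcomm, hx, hnil⟩
    let S := Subring.closure {a, x}
    have : IsMulCommutative S := Subring.isMulCommutative_closure (by
      simp only [Set.mem_insert_iff, Set.mem_singleton_iff]
      rintro _ (rfl | rfl) _ (rfl | rfl) <;> simp [hcomm])
    let a' : S := ⟨a, Subring.subset_closure (by simp)⟩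
    let x' : S := ⟨x, Subring.subset_closure (by simp)⟩
    have h' : IsHirano a' := ⟨x', Subtype.ext hcomm, Subtype.ext hx,
      (IsNilpotent.map_iff S.subtype_injective).mp hnil⟩
    simpa using (CommRing.isNilpotent_self_sub_pow_three_of_isHirano h').map S.subtype
  · intro h
    let S := Subring.closure {a}
    have : IsMulCommutative S := Subring.isMulCommutative_closure (by simp)
    let a' : S := ⟨a, Subring.subset_closure rfl⟩
    have h' : IsNilpotent (a' - a' ^ 3) := (IsNilpotent.map_iff S.subtype_injective).mp h
    simpa using (CommRing.isHirano_of_isNilpotent_self_sub_pow_three h').map S.subtype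

theorem IsNilpotent.spectrum_subset (𝕜 : Type*) {A : Type*} [Field 𝕜] [Ring A] [Algebra 𝕜 A]
    {q : A} (hq : IsNilpotent q) : spectrum 𝕜 q ⊆ {0} := by
  intro μ hμ
  by_contra hμ0
  refine spectrum.mem_iff.mp hμ ?_
  rw [sub_eq_add_neg]
  exact hq.neg.isUnit_add_left_of_commute ((isUnit_iff_ne_zero.mpr hμ0).map _)
    (Algebra.commute_algebraMap_right _ _).neg_left

theorem Matrix.isNilpotent_aeval_iff {ι K : Type*} [Fintype ι] [DecidableEq ι] [Field K]
    [IsAlgClosed K] (M : Matrix ι ι K) (p : K[X]) :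
    IsNilpotent (aeval M p) ↔ ∀ μ ∈ spectrum K M, p.IsRoot μ := by
  constructor
  · intro h μ hμ
    exact h.spectrum_subset K (spectrum.subset_polynomial_aeval M p ⟨μ, hμ, rfl⟩)
  · intro h
    have hdvd : M.charpoly ∣ p ^ M.charpoly.roots.card := by
      conv_lhs => rw [(IsAlgClosed.splits M.charpoly).eq_prod_roots_of_monic M.charpoly_monic]
      calc (M.charpoly.roots.map fun μ => X - C μ).prod ∣ (M.charpoly.roots.map fun _ => p).prod :=
            Multiset.prod_dvd_prod_of_dvd _ _ fun μ hμ => dvd_iff_isRoot.mpr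
              (h μ (mem_spectrum_iff_isRoot_charpoly.mpr (isRoot_of_mem_roots hμ)))
        _ = p ^ M.charpoly.roots.card := by simp
    obtain ⟨q, hq⟩ := hdvd
    exact ⟨_, by rw [← map_pow, hq, map_mul, aeval_self_charpoly, zero_mul]⟩

theorem self_sub_pow_three_eq_zero_iff {R : Type*} [CommRing R] [NoZeroDivisors R] {x : R} :
    x - x ^ 3 = 0 ↔ x = -1 ∨ x = 0 ∨ x = 1 := by
  have : x - x ^ 3 = -((x + 1) * x * (x - 1)) := by ring
  simp only [this, neg_eq_zero, mul_eq_zero, add_eq_zero_iff_eq_neg, sub_eq_zero, or_assoc]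

/-- A complex `n × n` matrix is Hirano invertible iff all its eigenvalues
(i.e. all elements of its spectrum) lie in `{-1, 0, 1}`. -/
theorem hirano_iff_eigenvalues {n : ℕ} (C : Matrix (Fin n) (Fin n) ℂ) :
    IsHirano C ↔ ∀ μ ∈ spectrum ℂ C, μ = -1 ∨ μ = 0 ∨ μ = 1 := by
  have hC : C - C ^ 3 = aeval C (X - X ^ 3 : ℂ[X]) := by simp
  simp only [isHirano_iff_isNilpotent_self_sub_pow_three, hC, Matrix.isNilpotent_aeval_iff,
    IsRoot.def, eval_sub, eval_X, eval_pow, self_sub_pow_three_eq_zero_iff]
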